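/- arXiv:1903.02634 — 7 statements merged into one kernel-verified Lean document; each statement's English description precedes it below -/
import Mathlib

section
/- Let 0 < R₂ < R₁ < L < R₁ + R₂ (a linearly stable period-two orbit of length L between two focusing points of radii of curvature R₁ > R₂). Then for every r with 0 ≤ r < L − R₁, the reduced parameters L' = L − 2r, R₁' = R₁ − r, R₂' = R₂ − r satisfy R₂' > 0, L' < R₁' + R₂', and (L' − R₁')·(L' − R₂') > 0; that is, the period-two orbit of the physical billiard with particle radius r remains linearly stable. -/
theorem physical_orbit_remains_stable_small_radius_general
    (R₁ R₂ L : ℝ) (h₂₁ : R₂ < R₁) (hL : L < R₁ + R₂) :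
    ∀ r : ℝ, 0 ≤ r → r < L - R₁ →
      R₂ - r > 0 ∧ L - 2 * r < (R₁ - r) + (R₂ - r) ∧
      ((L - 2 * r) - (R₁ - r)) * ((L - 2 * r) - (R₂ - r)) > 0 := by
  -- The reduction leaves `L - R₁ - R₂` unchanged and lowers each `L - Rᵢ` by `r`.
  intro r _ hr
  exact ⟨by linarith, by linarith, mul_pos (by linarith) (by linarith)⟩

/-- For a linearly stable period-two orbit of length `L` between two focusing points of
radii of curvature `R₁ > R₂` (with `0 < R₂ < R₁ < L < R₁ + R₂`), the orbit of the
physical billiard with particle radius `0 ≤ r < L - R₁` remains linearly stable: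
the reduced parameters `L' = L - 2r`, `R₁' = R₁ - r`, `R₂' = R₂ - r` satisfy
`R₂' > 0`, `L' < R₁' + R₂'` and `(L' - R₁') * (L' - R₂') > 0`. -/
theorem physical_orbit_remains_stable_small_radius
    (R₁ R₂ L : ℝ) (h₂ : 0 < R₂) (h₂₁ : R₂ < R₁) (h₁L : R₁ < L) (hL : L < R₁ + R₂) :
    ∀ r : ℝ, 0 ≤ r → r < L - R₁ →
      R₂ - r > 0 ∧ L - 2 * r < (R₁ - r) + (R₂ - r) ∧
      ((L - 2 * r) - (R₁ - r)) * ((L - 2 * r) - (R₂ - r)) > 0 :=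
  physical_orbit_remains_stable_small_radius_general R₁ R₂ L h₂₁ hL
end

section
/- Let 0 < R₂ < R₁ < L < R₁ + R₂. Then for every r with L − R₁ < r < min(L − R₂, L/2), the reduced parameters L' = L − 2r, R₁' = R₁ − r, R₂' = R₂ − r satisfy L' > 0 and (L' − R₁')·(L' − R₂') < 0; that is, for particle radii in this range the period-two orbit of the physical billiard violates condition (2) and is linearly unstable: the orbit loses stability as r crosses the critical value L − R₁. -/
theorem physical_orbit_loses_stability_general
    (R₁ R₂ L : ℝ) :
    ∀ r : ℝ, L - R₁ < r → r < min (L - R₂) (L / 2) →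
      L - 2 * r > 0 ∧
      ((L - 2 * r) - (R₁ - r)) * ((L - 2 * r) - (R₂ - r)) < 0 := by
  intro r hR₁ hr
  obtain ⟨hR₂, hL⟩ := lt_min_iff.mp hr
  exact ⟨by linarith, mul_neg_of_neg_of_pos (by linarith) (by linarith)⟩

/-- For a linearly stable period-two orbit of length `L` between two focusing points of
radii of curvature `R₁ > R₂` (with `0 < R₂ < R₁ < L < R₁ + R₂`), the orbit of the
physical billiard loses stability for particle radii `r` with
`L - R₁ < r < min (L - R₂) (L / 2)`: the reduced parameters satisfy `L' > 0` and
`(L' - R₁') * (L' - R₂') < 0`, so condition (2) is violated. -/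
theorem physical_orbit_loses_stability
    (R₁ R₂ L : ℝ) (h₂ : 0 < R₂) (h₂₁ : R₂ < R₁) (h₁L : R₁ < L) (hL : L < R₁ + R₂) :
    ∀ r : ℝ, L - R₁ < r → r < min (L - R₂) (L / 2) →
      L - 2 * r > 0 ∧
      ((L - 2 * r) - (R₁ - r)) * ((L - 2 * r) - (R₂ - r)) < 0 :=
  physical_orbit_loses_stability_general R₁ R₂ L
end

section
/- Let 0 < R₂ < R₁ < L < R₁ + R₂ and additionally L < 2·R₂. Then for every r with L − R₂ < r < L/2, the reduced parameters L' = L − 2r, R₁' = R₁ − r, R₂' = R₂ − r satisfy L' > 0, R₂' > 0, L' < R₁' + R₂', and (L' − R₁')·(L' − R₂') > 0; that is, the period-two orbit of the physical billiard reacquires linear stability once the particle radius exceeds L − R₂ (while still satisfying r < L/2, which requires L < 2·R₂). -/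
theorem physical_orbit_reacquires_stability_general
    (R₁ R₂ L : ℝ) (h₂₁ : R₂ < R₁) (hL : L < R₁ + R₂)
    (hL2 : L < 2 * R₂) :
    ∀ r : ℝ, L - R₂ < r → r < L / 2 →
      L - 2 * r > 0 ∧ R₂ - r > 0 ∧ L - 2 * r < (R₁ - r) + (R₂ - r) ∧
      ((L - 2 * r) - (R₁ - r)) * ((L - 2 * r) - (R₂ - r)) > 0 := by
  intro r hr_low hr_high
  have reduced_length_pos : L - 2 * r > 0 := by linarith
  have reduced_radius_pos : R₂ - r > 0 := by linarith [hL2]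
  have reduced_stable_sum : L - 2 * r < (R₁ - r) + (R₂ - r) := by linarith [hL]
  -- Once `r > L - R₂ > L - R₁`, the reduced orbit is shorter than both reduced radii.
  have shorter_than_R₁ : (L - 2 * r) - (R₁ - r) < 0 := by linarith [h₂₁]
  have shorter_than_R₂ : (L - 2 * r) - (R₂ - r) < 0 := by linarith
  exact ⟨reduced_length_pos, reduced_radius_pos, reduced_stable_sum,
    mul_pos_of_neg_of_neg shorter_than_R₁ shorter_than_R₂⟩

/-- For a period-two orbit of length `L` between two focusing points of radii of
curvature `R₁ > R₂` (with `0 < R₂ < R₁ < L < R₁ + R₂` and additionally `L < 2 * R₂`),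
the orbit of the physical billiard reacquires linear stability once the particle radius
exceeds `L - R₂` (while `r < L / 2`): the reduced parameters `L' = L - 2r`,
`R₁' = R₁ - r`, `R₂' = R₂ - r` satisfy `L' > 0`, `R₂' > 0`, `L' < R₁' + R₂'` and
`(L' - R₁') * (L' - R₂') > 0`. -/
theorem physical_orbit_reacquires_stability
    (R₁ R₂ L : ℝ) (h₂ : 0 < R₂) (h₂₁ : R₂ < R₁) (h₁L : R₁ < L) (hL : L < R₁ + R₂)
    (hL2 : L < 2 * R₂) :
    ∀ r : ℝ, L - R₂ < r → r < L / 2 →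
      L - 2 * r > 0 ∧ R₂ - r > 0 ∧ L - 2 * r < (R₁ - r) + (R₂ - r) ∧
      ((L - 2 * r) - (R₁ - r)) * ((L - 2 * r) - (R₂ - r)) > 0 :=
  physical_orbit_reacquires_stability_general R₁ R₂ L h₂₁ hL hL2
end

section
/- Let 0 < R₂ < R₁ and R₁ < L < min(R₁ + R₂, 2·R₂). Then for every r with 0 ≤ r < L/2, the reduced stability quantity satisfies (L − r − R₁)·(L − r − R₂) > 0 if and only if r < L − R₁ or r > L − R₂. Consequently, as the particle radius r increases through [0, L/2), the period-two orbit of the physical billiard is linearly stable, then unstable on the window [L − R₁, L − R₂], then stable again: the character of dynamics changes several times as the size of the particle increases. -/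
/-! Shrinking the table by the particle radius `r` shifts both factors of the stability quantity
by the same amount, so their difference `R₁ - R₂ > 0` never changes sign. A product of two
numbers `a < b` is positive exactly when the smaller one is positive or the larger one is
negative, which gives the two stable windows `r < L - R₁` and `r > L - R₂`. -/

theorem mul_pos_iff_of_lt {α : Type*} [Ring α] [LinearOrder α] [IsStrictOrderedRing α]
    {a b : α} (hab : a < b) : 0 < a * b ↔ 0 < a ∨ b < 0 := by
  rw [mul_pos_iff]
  constructor
  · rintro (⟨ha, -⟩ | ⟨-, hb⟩)
    exacts [Or.inl ha, Or.inr hb]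
  · rintro (ha | hb)
    exacts [Or.inl ⟨ha, ha.trans hab⟩, Or.inr ⟨hab.trans hb, hb⟩]

theorem physical_orbit_stability_windows_general
    (R₁ R₂ L : ℝ) (h₂₁ : R₂ < R₁) :
    ∀ r : ℝ, 0 ≤ r → r < L / 2 →
      ((L - r - R₁) * (L - r - R₂) > 0 ↔ (r < L - R₁ ∨ r > L - R₂)) := by
  intro r _ _
  rw [gt_iff_lt, mul_pos_iff_of_lt (by linarith : L - r - R₁ < L - r - R₂)]
  exact or_congr (by constructor <;> intro <;> linarith) (by constructor <;> intro <;> linarith)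

/-- With `0 < R₂ < R₁` and `R₁ < L < min (R₁ + R₂) (2 * R₂)`, for every particle
radius `0 ≤ r < L / 2` the reduced condition (2) quantity
`(L - r - R₁) * (L - r - R₂)` is positive if and only if `r < L - R₁` or `r > L - R₂`:
as `r` increases, the period-two orbit of the physical billiard is stable, then
unstable on `[L - R₁, L - R₂]`, then stable again. -/
theorem physical_orbit_stability_windows
    (R₁ R₂ L : ℝ) (h₂ : 0 < R₂) (h₂₁ : R₂ < R₁) (h₁L : R₁ < L)
    (hL : L < min (R₁ + R₂) (2 * R₂)) :
    ∀ r : ℝ, 0 ≤ r → r < L / 2 →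
      ((L - r - R₁) * (L - r - R₂) > 0 ↔ (r < L - R₁ ∨ r > L - R₂)) :=
  physical_orbit_stability_windows_general R₁ R₂ L h₂₁
end

section
/- Let R₂ > 0 and 0 < R₁ < L < 2·R₁ (a period-two orbit of length L between a focusing point of radius of curvature R₁ and a dispersing point of radius of curvature R₂, which is linearly unstable since L > R₁). Then for every r with L − R₁ < r < L/2, the reduced parameters L' = L − 2r, R₁' = R₁ − r, R₂' = R₂ + r satisfy L' > 0, R₁' > 0, L' > R₁' − R₂', and L' < R₁'; that is, the orbit of the physical billiard satisfies both linear stability conditions once the particle radius exceeds L − R₁, and this is possible (r < L/2) precisely because L < 2·R₁. -/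
/-! Passing to the reduced table shortens the orbit by `2r` and moves the two radii of
curvature towards each other by `r` each, so `R₁ - R₂` also drops by `2r`: the condition
`L > R₁ - R₂`, which holds for every unstable orbit, survives unchanged, while `L < R₁`
becomes `L - R₁ < r`. The constraint `r < L / 2` keeps the reduced orbit nondegenerate. -/

section ReducedTable

variable {α : Type*} [CommRing α] [LinearOrder α] [IsStrictOrderedRing α]

theorem reduced_lower_stable_iff (L R₁ R₂ r : α) :
    (R₁ - r) - (R₂ + r) < L - 2 * r ↔ R₁ - R₂ < L := by
  constructor <;> intro h <;> linarith

theorem reduced_upper_stable_iff (L R₁ r : α) : L - 2 * r < R₁ - r ↔ L - R₁ < r := by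
  constructor <;> intro h <;> linarith

end ReducedTable

theorem focusing_dispersing_physical_becomes_stable_general
    (R₁ R₂ L : ℝ) (hR₂ : 0 < R₂) (h₁L : R₁ < L) :
    ∀ r : ℝ, L - R₁ < r → r < L / 2 →
      L - 2 * r > 0 ∧ R₁ - r > 0 ∧
      L - 2 * r > (R₁ - r) - (R₂ + r) ∧ L - 2 * r < R₁ - r := by
  intro r hr_lower hr_upper
  refine ⟨by linarith, by linarith, ?_, (reduced_upper_stable_iff L R₁ r).2 hr_lower⟩
  exact (reduced_lower_stable_iff L R₁ R₂ r).2 (by linarith)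

/-- An unstable period-two orbit of length `L` between a focusing point of radius of
curvature `R₁` (with `0 < R₁ < L < 2 * R₁`) and a dispersing point of radius of
curvature `R₂ > 0` becomes linearly stable in the physical billiard once the particle
radius exceeds `L - R₁` (while `r < L / 2`): the reduced parameters `L' = L - 2r`,
`R₁' = R₁ - r`, `R₂' = R₂ + r` satisfy `L' > 0`, `R₁' > 0`, `L' > R₁' - R₂'`
and `L' < R₁'`. -/
theorem focusing_dispersing_physical_becomes_stable
    (R₁ R₂ L : ℝ) (hR₂ : 0 < R₂) (hR₁ : 0 < R₁) (h₁L : R₁ < L) (hL : L < 2 * R₁) :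
    ∀ r : ℝ, L - R₁ < r → r < L / 2 →
      L - 2 * r > 0 ∧ R₁ - r > 0 ∧
      L - 2 * r > (R₁ - r) - (R₂ + r) ∧ L - 2 * r < R₁ - r :=
  focusing_dispersing_physical_becomes_stable_general R₁ R₂ L hR₂ h₁L
end

section
/- Let ρ₁ > 0, ρ₂ > 0 and let L = ρ₁ (the tangency configuration of the paper's Lemma 3, where the focusing circle of radius ρ₁ and the dispersing circle of radius ρ₂ are tangent). Then for every r with 0 < r < L/2, the reduced parameters L' = L − 2r, ρ₁' = ρ₁ − r, ρ₂' = ρ₂ + r satisfy L' > 0, ρ₁' > 0, L' > ρ₁' − ρ₂', and L' < ρ₁'; that is, the period-two orbit of the physical billiard is linearly stable for every positive particle radius r < L/2, whereas for r = 0 condition (2) fails (L = ρ₁ gives equality, not strict inequality). -/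
theorem tangent_circles_soft_transition_general
    (ρ₁ ρ₂ L : ℝ) (hρ₂ : 0 < ρ₂) (hL : L = ρ₁) :
    (∀ r : ℝ, 0 < r → r < L / 2 →
      L - 2 * r > 0 ∧ ρ₁ - r > 0 ∧
      L - 2 * r > (ρ₁ - r) - (ρ₂ + r) ∧ L - 2 * r < ρ₁ - r) ∧
    ¬ (L < ρ₁) := by
  subst hL
  exact ⟨fun r hr hrL => ⟨by linarith, by linarith, by linarith, by linarith⟩, lt_irrefl _⟩

/-- Tangency configuration of Lemma 3: a period-two orbit of length `L = ρ₁` between a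
focusing point of radius of curvature `ρ₁` and a dispersing point of radius of curvature
`ρ₂` (both positive) becomes linearly stable for every positive particle radius
`0 < r < L / 2`: the reduced parameters `L' = L - 2r`, `ρ₁' = ρ₁ - r`, `ρ₂' = ρ₂ + r`
satisfy `L' > 0`, `ρ₁' > 0`, `L' > ρ₁' - ρ₂'` and `L' < ρ₁'`; whereas for `r = 0`
condition (2) fails since `L = ρ₁` gives equality, not strict inequality. -/
theorem tangent_circles_soft_transition
    (ρ₁ ρ₂ L : ℝ) (hρ₁ : 0 < ρ₁) (hρ₂ : 0 < ρ₂) (hL : L = ρ₁) :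
    (∀ r : ℝ, 0 < r → r < L / 2 →
      L - 2 * r > 0 ∧ ρ₁ - r > 0 ∧
      L - 2 * r > (ρ₁ - r) - (ρ₂ + r) ∧ L - 2 * r < ρ₁ - r) ∧
    ¬ (L < ρ₁) :=
  tangent_circles_soft_transition_general ρ₁ ρ₂ L hρ₂ hL
end

section
/- Let E be the Euclidean plane ℝ² (EuclideanSpace ℝ (Fin 2)), let K ⊆ E be a nonempty closed convex set, and let r ≥ 0. Then the set of points x such that the closed ball of radius r centered at x is contained in the closed r-thickening of K equals K itself: {x | closedBall x r ⊆ Metric.cthickening r K} = K. -/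
open Metric
open scoped RealInnerProductSpace

/-!
If `x ∉ K` and `p` is the nearest point of `K` to `x`, then `p` stays the nearest point of `K`
to every point of the ray from `p` through `x`, by the obtuse-angle characterisation of the
metric projection onto a convex set. Going a further distance `r` along that ray from `x` gives a
point `y` of the disk around `x` with `infDist y K = infDist x K + r > r`, so `y ∉ cthickening r K`.
-/

section NearestPoint

variable {E : Type*} [NormedAddCommGroup E] [InnerProductSpace ℝ E] {K : Set E} {x p : E}

theorem infDist_eq_dist_iff_inner_le_zero (hK : Convex ℝ K) (hp : p ∈ K) :
    infDist x K = dist x p ↔ ∀ w ∈ K, ⟪x - p, w - p⟫ ≤ 0 := by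
  simp only [infDist_eq_iInf, dist_eq_norm]
  exact eq_comm.trans (norm_eq_iInf_iff_real_inner_le_zero hK hp)

theorem Convex.exists_infDist_eq_dist (hK : Convex ℝ K) (hc : IsComplete K) (hne : K.Nonempty)
    (x : E) : ∃ p ∈ K, infDist x K = dist x p := by
  obtain ⟨p, hp, hmin⟩ := exists_norm_eq_iInf_of_complete_convex hne hc hK x
  refine ⟨p, hp, ?_⟩
  simp only [infDist_eq_iInf, dist_eq_norm, hmin]

theorem infDist_homothety_of_infDist_eq_dist (hK : Convex ℝ K) (hp : p ∈ K)
    (hx : infDist x K = dist x p) {s : ℝ} (hs : 0 ≤ s) :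
    infDist (AffineMap.homothety p s x) K = s * infDist x K := by
  have hobtuse : ∀ w ∈ K, ⟪AffineMap.homothety p s x - p, w - p⟫ ≤ 0 := fun w hw => by
    rw [AffineMap.homothety_apply, vsub_eq_sub, vadd_eq_add, add_sub_cancel_right,
      real_inner_smul_left]
    exact mul_nonpos_of_nonneg_of_nonpos hs ((infDist_eq_dist_iff_inner_le_zero hK hp).1 hx w hw)
  rw [(infDist_eq_dist_iff_inner_le_zero hK hp).2 hobtuse, dist_homothety_center, hx,
    Real.norm_of_nonneg hs, dist_comm]

theorem exists_dist_eq_and_infDist_eq_add (hK : Convex ℝ K) (hc : IsComplete K)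
    (hne : K.Nonempty) (hx : x ∉ K) {r : ℝ} (hr : 0 ≤ r) :
    ∃ y, dist y x = r ∧ infDist y K = infDist x K + r := by
  obtain ⟨p, hp, hpx⟩ := hK.exists_infDist_eq_dist hc hne x
  have hd : 0 < dist x p := dist_pos.2 fun h => hx (h ▸ hp)
  refine ⟨AffineMap.homothety p (1 + r / dist x p) x, ?_, ?_⟩
  · rw [dist_homothety_self, sub_add_cancel_left, norm_neg,
      Real.norm_of_nonneg (div_nonneg hr hd.le), dist_comm p x, div_mul_cancel₀ r hd.ne']
  · rw [infDist_homothety_of_infDist_eq_dist hK hp hpx (by positivity), hpx]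
    field_simp

end NearestPoint

/-- In the Euclidean plane, for a nonempty closed convex set `K` and `r ≥ 0`, the
reduced table of the closed `r`-thickening of `K` is exactly `K`: the set of centers
`x` whose closed disk of radius `r` is contained in `cthickening r K` equals `K`.
This is the geometric fact behind Lemma 2 (triangle with a smoothened vertex). -/
theorem reduced_table_of_cthickening
    (K : Set (EuclideanSpace ℝ (Fin 2))) (hne : K.Nonempty)
    (hcl : IsClosed K) (hconv : Convex ℝ K) (r : ℝ) (hr : 0 ≤ r) :
    {x : EuclideanSpace ℝ (Fin 2) | closedBall x r ⊆ Metric.cthickening r K} = K := by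
  ext x
  refine ⟨fun hball => ?_, fun hx => closedBall_subset_cthickening hx r⟩
  by_contra hx
  obtain ⟨y, hyx, hy⟩ := exists_dist_eq_and_infDist_eq_add hconv hcl.isComplete hne hx hr
  have hyK : infDist y K ≤ r :=
    ENNReal.toReal_le_of_le_ofReal hr (mem_cthickening_iff.1 (hball (mem_closedBall.2 hyx.le)))
  have hxK : 0 < infDist x K := (hcl.notMem_iff_infDist_pos hne).1 hx
  linarith
end
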